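/- arXiv:1812.10608 — 3 statements merged into one kernel-verified Lean document; each statement's English description precedes it below -/
import Mathlib

section
/- In the second nilpotent product A *₂ B, the image of A commutes with the image of the commutator subgroup [B,B]; that is, for all a ∈ A and b, b' ∈ B, [a,[b,b']] = 1. -/
/-!
The defining relations make every `⁅a, b⁆` central in `A *₂ B`. For fixed `a`, the identity
`⁅a, c * d⁆ = ⁅a, c⁆ * c ⁅a, d⁆ c⁻¹` then shows that `c ↦ ⁅a, c⁆` is a homomorphism from `B`
with abelian image, so it kills `⁅b, b'⁆`.
-/

open Monoid
open scoped commutatorElement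

/-- The normal subgroup of the free product `A ∗ B` generated by commutators
`⁅x, ⁅a, b⁆⁆` with `x ∈ A ∗ B`, `a ∈ A`, `b ∈ B`. -/
def nil2Rel (A B : Type*) [Group A] [Group B] : Subgroup (Coprod A B) :=
  Subgroup.normalClosure
    {z | ∃ (x : Coprod A B) (a : A) (b : B), z = ⁅x, ⁅(Coprod.inl a : Coprod A B), Coprod.inr b⁆⁆}

instance (A B : Type*) [Group A] [Group B] : (nil2Rel A B).Normal :=
  Subgroup.normalClosure_normal

/-- The second nilpotent product `A *₂ B = (A ∗ B)/[A ∗ B, [A,B]]`. -/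
def Nil2 (A B : Type*) [Group A] [Group B] : Type _ :=
  Coprod A B ⧸ nil2Rel A B

instance (A B : Type*) [Group A] [Group B] : Group (Nil2 A B) :=
  QuotientGroup.Quotient.group _

/-- Canonical map `A → A *₂ B`. -/
def Nil2.inl {A B : Type*} [Group A] [Group B] : A →* Nil2 A B :=
  (QuotientGroup.mk' (nil2Rel A B)).comp Coprod.inl

/-- Canonical map `B → A *₂ B`. -/
def Nil2.inr {A B : Type*} [Group A] [Group B] : B →* Nil2 A B :=
  (QuotientGroup.mk' (nil2Rel A B)).comp Coprod.inr

/-- The subgroup `[A,B]⁽²⁾` of `A *₂ B` generated by the commutators `⁅a, b⁆`. -/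
def commSubgroup (A B : Type*) [Group A] [Group B] : Subgroup (Nil2 A B) :=
  Subgroup.closure {z | ∃ (a : A) (b : B), z = ⁅(Nil2.inl a : Nil2 A B), Nil2.inr b⁆}

def centralCommutatorHom {G B : Type*} [Group G] [Group B] (g : G) (φ : B →* G)
    (hcentral : ∀ c, ⁅g, φ c⁆ ∈ Subgroup.center G) : B →* G where
  toFun c := ⁅g, φ c⁆
  map_one' := by rw [map_one, commutatorElement_one_right]
  map_mul' c d := by
    rw [map_mul, commutatorElement_mul_right_eq_mul_conj,
      mul_assoc _ (φ c), Subgroup.mem_center_iff.mp (hcentral d), ← mul_assoc,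
      mul_inv_cancel_right]

theorem commutatorElement_commutatorElement_eq_one_of_mem_center {G B : Type*} [Group G]
    [Group B] (g : G) (φ : B →* G) (hcentral : ∀ c, ⁅g, φ c⁆ ∈ Subgroup.center G) (b b' : B) :
    ⁅g, ⁅φ b, φ b'⁆⁆ = 1 := by
  let f := centralCommutatorHom g φ hcentral
  calc ⁅g, ⁅φ b, φ b'⁆⁆ = f ⁅b, b'⁆ := by rw [← map_commutatorElement]; rfl
    _ = ⁅f b, f b'⁆ := map_commutatorElement f b b'
    _ = 1 := commutatorElement_eq_one_iff_mul_comm.mpr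
      (Subgroup.mem_center_iff.mp (hcentral b') (f b))

theorem Nil2.commutatorElement_inl_inr_mem_center {A B : Type*} [Group A] [Group B] (a : A)
    (b : B) : ⁅(Nil2.inl a : Nil2 A B), Nil2.inr b⁆ ∈ Subgroup.center (Nil2 A B) := by
  refine Subgroup.mem_center_iff.mpr fun x => ?_
  obtain ⟨y, rfl⟩ := QuotientGroup.mk'_surjective (nil2Rel A B) x
  have hrel : ⁅y, ⁅(Coprod.inl a : Coprod A B), Coprod.inr b⁆⁆ ∈ nil2Rel A B :=
    Subgroup.subset_normalClosure ⟨y, a, b, rfl⟩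
  have hquot := (QuotientGroup.eq_one_iff _).mpr hrel
  rw [← QuotientGroup.mk'_apply, map_commutatorElement, map_commutatorElement] at hquot
  exact commutatorElement_eq_one_iff_mul_comm.mp hquot

/-- In `A *₂ B`, the image of `A` commutes with the image of `[B,B]`. -/
theorem stmt3 (A B : Type*) [Group A] [Group B] (a : A) (b b' : B) :
    ⁅(Nil2.inl a : Nil2 A B), ⁅(Nil2.inr b : Nil2 A B), (Nil2.inr b' : Nil2 A B)⁆⁆ = 1 :=
  commutatorElement_commutatorElement_eq_one_of_mem_center _ _
    (Nil2.commutatorElement_inl_inr_mem_center a) b b'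
end

section
/- The Whitney tensor product A ⊗̃ B of two (not necessarily abelian) groups, defined as the quotient of the free group on A × B by the relations (a₁a₂, b) = (a₁,b)(a₂,b) and (a, b₁b₂) = (a,b₁)(a,b₂), is an abelian group. -/
open Monoid
open scoped commutatorElement

/-- The relations defining the Whitney tensor product: bilinearity in each variable. -/
def whitneyRel (A B : Type*) [Group A] [Group B] : Subgroup (FreeGroup (A × B)) :=
  Subgroup.normalClosure
    ({z | ∃ (a₁ a₂ : A) (b : B),
        z = FreeGroup.of (a₁ * a₂, b) * (FreeGroup.of (a₂, b))⁻¹ * (FreeGroup.of (a₁, b))⁻¹} ∪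
     {z | ∃ (a : A) (b₁ b₂ : B),
        z = FreeGroup.of (a, b₁ * b₂) * (FreeGroup.of (a, b₂))⁻¹ * (FreeGroup.of (a, b₁))⁻¹})

instance (A B : Type*) [Group A] [Group B] : (whitneyRel A B).Normal :=
  Subgroup.normalClosure_normal

/-- The Whitney tensor product of two (not necessarily abelian) groups. -/
def WhitneyTensor (A B : Type*) [Group A] [Group B] : Type _ :=
  FreeGroup (A × B) ⧸ whitneyRel A B

instance (A B : Type*) [Group A] [Group B] : Group (WhitneyTensor A B) :=
  QuotientGroup.Quotient.group _

theorem mul_comm_of_closure_eq_top {G : Type*} [Group G] {s : Set G}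
    (hs : Subgroup.closure s = ⊤) (hcomm : ∀ x ∈ s, ∀ y ∈ s, x * y = y * x) (x y : G) :
    x * y = y * x :=
  have hx (z : G) : z ∈ s.centralizer.centralizer :=
    Subgroup.closure_le_centralizer_centralizer s (hs ▸ Subgroup.mem_top z)
  Set.centralizer_centralizer_comm_of_comm hcomm x (hx x) y (hx y)

/-- Eckmann–Hilton: expanding `f (a₁ * a₂) (b₁ * b₂)` in the two possible orders and cancelling
the outer factors swaps the middle ones. -/
theorem mul_comm_of_map_mul_left_of_map_mul_right {A B G : Type*} [Mul A] [Mul B] [Group G]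
    {f : A → B → G} (hl : ∀ a₁ a₂ b, f (a₁ * a₂) b = f a₁ b * f a₂ b)
    (hr : ∀ a b₁ b₂, f a (b₁ * b₂) = f a b₁ * f a b₂) (a₁ a₂ : A) (b₁ b₂ : B) :
    f a₂ b₁ * f a₁ b₂ = f a₁ b₂ * f a₂ b₁ := by
  have h := (hr (a₁ * a₂) b₁ b₂).symm.trans (hl a₁ a₂ (b₁ * b₂))
  rwa [hl, hl, hr, hr, mul_assoc, mul_assoc, mul_left_cancel_iff, ← mul_assoc, ← mul_assoc,
    mul_right_cancel_iff] at h

namespace WhitneyTensor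

variable {A B : Type*} [Group A] [Group B]

def of (a : A) (b : B) : WhitneyTensor A B :=
  QuotientGroup.mk (FreeGroup.of (a, b))

theorem of_mul_left (a₁ a₂ : A) (b : B) : of (a₁ * a₂) b = of a₁ b * of a₂ b := by
  refine QuotientGroup.eq_iff_div_mem.mpr ?_
  have h : FreeGroup.of (a₁ * a₂, b) * (FreeGroup.of (a₂, b))⁻¹ * (FreeGroup.of (a₁, b))⁻¹
      ∈ whitneyRel A B :=
    Subgroup.subset_normalClosure (Or.inl ⟨a₁, a₂, b, rfl⟩)
  simpa only [div_eq_mul_inv, mul_inv_rev, mul_assoc] using h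

theorem of_mul_right (a : A) (b₁ b₂ : B) : of a (b₁ * b₂) = of a b₁ * of a b₂ := by
  refine QuotientGroup.eq_iff_div_mem.mpr ?_
  have h : FreeGroup.of (a, b₁ * b₂) * (FreeGroup.of (a, b₂))⁻¹ * (FreeGroup.of (a, b₁))⁻¹
      ∈ whitneyRel A B :=
    Subgroup.subset_normalClosure (Or.inr ⟨a, b₁, b₂, rfl⟩)
  simpa only [div_eq_mul_inv, mul_inv_rev, mul_assoc] using h

theorem closure_range_of :
    Subgroup.closure (Set.range fun p : A × B ↦ of p.1 p.2) = ⊤ := by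
  have h := congrArg (Subgroup.map (QuotientGroup.mk' (whitneyRel A B)))
    (FreeGroup.closure_range_of (A × B))
  rwa [MonoidHom.map_closure, ← Set.range_comp,
    Subgroup.map_top_of_surjective _ (QuotientGroup.mk'_surjective _)] at h

end WhitneyTensor

/-- The Whitney tensor product of two groups is abelian. -/
theorem stmt6 (A B : Type*) [Group A] [Group B] (x y : WhitneyTensor A B) :
    x * y = y * x := by
  refine mul_comm_of_closure_eq_top WhitneyTensor.closure_range_of ?_ x y
  rintro _ ⟨⟨a₂, b₁⟩, rfl⟩ _ ⟨⟨a₁, b₂⟩, rfl⟩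
  exact mul_comm_of_map_mul_left_of_map_mul_right WhitneyTensor.of_mul_left
    WhitneyTensor.of_mul_right a₁ a₂ b₁ b₂
end

section
/- If A is a perfect group (A = [A,A]), then for any group B the second nilpotent product A *₂ B is isomorphic to the direct product A × B. -/
open Monoid
open scoped commutatorElement

/-! In `A *₂ B` every commutator `⁅a, b⁆` is central, so for fixed `b` the map `a ↦ ⁅a, b⁆` is a
homomorphism from `A` into an abelian group and therefore kills `⁅A, A⁆ = A`. Thus the images of
`A` and `B` commute, and `(a, b) ↦ a * b` is an inverse of the projection `A *₂ B → A × B`. -/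

-- for the `CommGroup` instance on `Subgroup.center G`
open scoped IsMulCommutative

section CentralCommutators

variable {G A : Type*} [Group G] [Group A]

def commutatorHomToCenter (f : A →* G) (y : G) (hc : ∀ a, ⁅f a, y⁆ ∈ Subgroup.center G) :
    A →* Subgroup.center G where
  toFun a := ⟨⁅f a, y⁆, hc a⟩
  map_one' := by ext; simp
  map_mul' a₁ a₂ := by
    ext
    have hconj : f a₁ * ⁅f a₂, y⁆ * (f a₁)⁻¹ = ⁅f a₂, y⁆ := by
      rw [(Subgroup.mem_center_iff.1 (hc a₂) (f a₁)), mul_inv_cancel_right]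
    simp only [map_mul, commutatorElement_mul_left_eq_conj_mul, hconj, Subgroup.coe_mul]
    exact Subgroup.mem_center_iff.1 (hc a₁) _

theorem commute_of_mem_commutator_of_commutatorElement_mem_center (f : A →* G) (y : G)
    (hc : ∀ a, ⁅f a, y⁆ ∈ Subgroup.center G) {a : A} (ha : a ∈ commutator A) :
    Commute (f a) y := by
  have h := Abelianization.commutator_subset_ker (commutatorHomToCenter f y hc) ha
  rw [MonoidHom.mem_ker] at h
  exact commutatorElement_eq_one_iff_commute.1 (congrArg Subtype.val h)

end CentralCommutators

namespace Nil2

variable {A B : Type*} [Group A] [Group B]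

theorem hom_ext {P : Type*} [Monoid P] {f g : Nil2 A B →* P}
    (h₁ : f.comp inl = g.comp inl) (h₂ : f.comp inr = g.comp inr) : f = g :=
  QuotientGroup.monoidHom_ext _ (Coprod.hom_ext h₁ h₂)

theorem commutatorElement_inl_inr_mem_center_s9 (a : A) (b : B) :
    ⁅(inl a : Nil2 A B), inr b⁆ ∈ Subgroup.center (Nil2 A B) := by
  refine Subgroup.mem_center_iff.2 fun x => ?_
  obtain ⟨x, rfl⟩ := QuotientGroup.mk'_surjective (nil2Rel A B) x
  refine (commutatorElement_eq_one_iff_commute.1 ?_).eq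
  change ⁅QuotientGroup.mk' (nil2Rel A B) x, ⁅QuotientGroup.mk' (nil2Rel A B) (Coprod.inl a),
    QuotientGroup.mk' (nil2Rel A B) (Coprod.inr b)⁆⁆ = 1
  rw [← map_commutatorElement, ← map_commutatorElement, ← MonoidHom.mem_ker,
    QuotientGroup.ker_mk']
  exact Subgroup.subset_normalClosure ⟨x, a, b, rfl⟩

theorem commute_inl_inr_of_perfect (hA : commutator A = ⊤) (a : A) (b : B) :
    Commute (inl a : Nil2 A B) (inr b) :=
  commute_of_mem_commutator_of_commutatorElement_mem_center inl (inr b)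
    (commutatorElement_inl_inr_mem_center_s9 · b) (hA ▸ Subgroup.mem_top a)

theorem nil2Rel_le_ker_toProd : nil2Rel A B ≤ (Coprod.toProd : Coprod A B →* A × B).ker := by
  refine Subgroup.normalClosure_le_normal ?_
  rintro _ ⟨x, a, b, rfl⟩
  have hab : ⁅((a, 1) : A × B), ((1 : A), b)⁆ = 1 := (MonoidHom.commute_inl_inr a b).commutator_eq
  simp [hab]

def toProd : Nil2 A B →* A × B :=
  QuotientGroup.lift _ Coprod.toProd nil2Rel_le_ker_toProd

@[simp]
theorem toProd_inl (a : A) : toProd (inl a : Nil2 A B) = (a, 1) := rfl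

@[simp]
theorem toProd_inr (b : B) : toProd (inr b : Nil2 A B) = (1, b) := rfl

end Nil2

/-- If `A` is perfect then `A *₂ B ≅ A × B`. -/
theorem stmt9 (A B : Type*) [Group A] [Group B] (hA : commutator A = ⊤) :
    Nonempty (Nil2 A B ≃* A × B) := by
  let ofProd : A × B →* Nil2 A B :=
    MonoidHom.noncommCoprod Nil2.inl Nil2.inr (Nil2.commute_inl_inr_of_perfect hA)
  refine ⟨MonoidHom.toMulEquiv Nil2.toProd ofProd ?_ ?_⟩
  · exact Nil2.hom_ext (by ext; simp [ofProd]) (by ext; simp [ofProd])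
  · ext ⟨a, b⟩ <;> simp [ofProd]
end
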